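/- arXiv:1601.02848 — 3 statements merged into one kernel-verified Lean document; each statement's English description precedes it below -/
import Mathlib

section
/- For RDTs D₁ and D₂ on the same scheme (maps T → L with finite support, L a complete linear order): D₁ ⊑ D₂ if and only if there exists an order-preserving map f : L → L such that D₂ = f ∘ D₁. -/
/-!
Given `D₁ ⊑ D₂`, the map `x ↦ ⨆ {D₂ r | D₁ r ≤ x}` is monotone and sends `D₁ r` to `D₂ r`,
because `⊑` says exactly that `D₁ r' ≤ D₁ r` forces `D₂ r' ≤ D₂ r`. Conversely, a monotone
factor carries every inequality between values of `D₁` over to `D₂`.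
-/

section SupAlong

variable {T α β : Type*} [Preorder α] [CompleteLattice β]

def supAlong (D₁ : T → α) (D₂ : T → β) (x : α) : β :=
  ⨆ (r : T) (_ : D₁ r ≤ x), D₂ r

theorem supAlong_mono (D₁ : T → α) (D₂ : T → β) : Monotone (supAlong D₁ D₂) :=
  fun _ _ hxy => biSup_mono fun _ hr => hr.trans hxy

theorem supAlong_apply_self {D₁ : T → α} {D₂ : T → β}
    (h : ∀ r r', D₁ r ≤ D₁ r' → D₂ r ≤ D₂ r') (r : T) :
    supAlong D₁ D₂ (D₁ r) = D₂ r :=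
  le_antisymm (iSup₂_le fun r' hr' => h r' r hr') (le_iSup₂_of_le r le_rfl le_rfl)

theorem exists_monotone_factor_of_le_imp_le {D₁ : T → α} {D₂ : T → β}
    (h : ∀ r r', D₁ r ≤ D₁ r' → D₂ r ≤ D₂ r') :
    ∃ f : α → β, Monotone f ∧ ∀ r, D₂ r = f (D₁ r) :=
  ⟨supAlong D₁ D₂, supAlong_mono D₁ D₂, fun r => (supAlong_apply_self h r).symm⟩

end SupAlong

theorem ordinalIncl_iff_monotone_factor_general {L : Type*} [CompleteLinearOrder L]
    {T : Type*} (D₁ D₂ : T → L) :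
    (∀ r : T, {r' : T | D₁ r ≤ D₁ r'} ⊆ {r' : T | D₂ r ≤ D₂ r'}) ↔
      ∃ f : L → L, Monotone f ∧ ∀ r : T, D₂ r = f (D₁ r) := by
  constructor
  · exact fun h => exists_monotone_factor_of_le_imp_le fun r r' => @h r r'
  · rintro ⟨f, hf, hfD⟩ r r' hr
    simpa only [Set.mem_ofPred_eq, hfD] using hf hr

/-- For RDTs (finite-support maps into a complete linear order),
`D₁ ⊑ D₂` iff there is an order-preserving map `f : L → L` with
`D₂ = f ∘ D₁`. -/
theorem ordinalIncl_iff_monotone_factor {L : Type*} [CompleteLinearOrder L]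
    {T : Type*} (D₁ D₂ : T → L)
    (h₁ : {r : T | ⊥ < D₁ r}.Finite) (h₂ : {r : T | ⊥ < D₂ r}.Finite) :
    (∀ r : T, {r' : T | D₁ r ≤ D₁ r'} ⊆ {r' : T | D₂ r ≤ D₂ r'}) ↔
      ∃ f : L → L, Monotone f ∧ ∀ r : T, D₂ r = f (D₁ r) :=
  ordinalIncl_iff_monotone_factor_general D₁ D₂
end

section
/- For RDTs D₁ and D₂ on the same scheme: D₁ and D₂ are ordinally equivalent (D₁ ⊑ D₂ and D₂ ⊑ D₁) if and only if there is an order isomorphism f : L(D₁) → L(D₂) between their ranges such that D₂ = f ∘ D₁. -/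
/-- For RDTs `D₁`, `D₂` with finite support: `D₁ ≡ D₂` (mutual ordinal
inclusion) iff there is an order isomorphism `f : L(D₁) → L(D₂)` between
their ranges with `D₂ = f ∘ D₁`. -/
theorem ordinalEquiv_iff_orderIso {L : Type*} [CompleteLinearOrder L]
    {T : Type*} (D₁ D₂ : T → L)
    (h₁ : {r : T | ⊥ < D₁ r}.Finite) (h₂ : {r : T | ⊥ < D₂ r}.Finite) :
    ((∀ r : T, {r' : T | D₁ r ≤ D₁ r'} ⊆ {r' : T | D₂ r ≤ D₂ r'}) ∧
     (∀ r : T, {r' : T | D₂ r ≤ D₂ r'} ⊆ {r' : T | D₁ r ≤ D₁ r'})) ↔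
      ∃ f : Set.range D₁ → Set.range D₂,
        Function.Surjective f ∧
        (∀ a b : Set.range D₁, a ≤ b ↔ f a ≤ f b) ∧
        (∀ r : T, D₂ r = f ⟨D₁ r, ⟨r, rfl⟩⟩) := by
  constructor
  · rintro ⟨hA, hB⟩
    -- key monotonicity facts
    have key : ∀ r r' : T, D₁ r ≤ D₁ r' ↔ D₂ r ≤ D₂ r' := by
      intro r r'
      exact ⟨fun h => hA r h, fun h => hB r h⟩
    -- choose a preimage for each element of range D₁
    refine ⟨fun v => ⟨D₂ v.2.choose, ⟨v.2.choose, rfl⟩⟩, ?_, ?_, ?_⟩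
    · rintro ⟨y, r, rfl⟩
      refine ⟨⟨D₁ r, ⟨r, rfl⟩⟩, ?_⟩
      have hc : D₁ (⟨D₁ r, ⟨r, rfl⟩⟩ : Set.range D₁).2.choose = D₁ r :=
        (⟨D₁ r, ⟨r, rfl⟩⟩ : Set.range D₁).2.choose_spec
      have := le_antisymm ((key _ _).mp hc.le) ((key _ _).mp hc.ge)
      exact Subtype.ext this
    · rintro ⟨a, ra, rfl⟩ ⟨b, rb, rfl⟩
      have hca : D₁ (⟨D₁ ra, ⟨ra, rfl⟩⟩ : Set.range D₁).2.choose = D₁ ra :=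
        (⟨D₁ ra, ⟨ra, rfl⟩⟩ : Set.range D₁).2.choose_spec
      have hcb : D₁ (⟨D₁ rb, ⟨rb, rfl⟩⟩ : Set.range D₁).2.choose = D₁ rb :=
        (⟨D₁ rb, ⟨rb, rfl⟩⟩ : Set.range D₁).2.choose_spec
      have ea : D₂ (⟨D₁ ra, ⟨ra, rfl⟩⟩ : Set.range D₁).2.choose = D₂ ra :=
        le_antisymm ((key _ _).mp hca.le) ((key _ _).mp hca.ge)
      have eb : D₂ (⟨D₁ rb, ⟨rb, rfl⟩⟩ : Set.range D₁).2.choose = D₂ rb :=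
        le_antisymm ((key _ _).mp hcb.le) ((key _ _).mp hcb.ge)
      simp only [Subtype.mk_le_mk, ea, eb]
      exact key ra rb
    · intro r
      have hc : D₁ (⟨D₁ r, ⟨r, rfl⟩⟩ : Set.range D₁).2.choose = D₁ r :=
        (⟨D₁ r, ⟨r, rfl⟩⟩ : Set.range D₁).2.choose_spec
      exact le_antisymm ((key _ _).mp hc.ge) ((key _ _).mp hc.le)
  · rintro ⟨f, hsurj, hord, heq⟩
    constructor
    · intro r r' hr
      have : (⟨D₁ r, ⟨r, rfl⟩⟩ : Set.range D₁) ≤ ⟨D₁ r', ⟨r', rfl⟩⟩ := hr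
      have h3 := (hord _ _).mp this
      show D₂ r ≤ D₂ r'
      rw [heq r, heq r']
      exact_mod_cast h3
    · intro r r' hr
      have h2 : (f ⟨D₁ r, ⟨r, rfl⟩⟩ : Set.range D₂) ≤ f ⟨D₁ r', ⟨r', rfl⟩⟩ := by
        simp only [← Subtype.coe_le_coe, ← heq r, ← heq r']
        exact hr
      exact (hord _ _).mpr h2
end

section
/- The division of RDTs is invariant under order embeddings: if f : L → L is an order embedding with f(1) = 1, D₁ an RDT on R∪S with finite support, D₂ an RDT on S with finite support, D₃ an RDT on R, then f ∘ (D₃ ÷^{D₁} D₂) = (f∘D₃) ÷^{f∘D₁} (f∘D₂), where (D₃ ÷^{D₁} D₂)(r) = inf({D₂(s) → D₁(r,s) : s} ∪ {D₃(r)}) and a → b = 1 if a ≤ b, else b. -/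
/-- The residuum of a bounded totally ordered set:
`a → b = ⊤` if `a ≤ b`, else `b`. -/
def godelImp {L : Type*} [LinearOrder L] [OrderTop L] (a b : L) : L :=
  if a ≤ b then ⊤ else b

/-- Invariance of division of RDTs under order embeddings preserving `⊤`:
`f ∘ (D₃ ÷^{D₁} D₂) = (f∘D₃) ÷^{f∘D₁} (f∘D₂)`. -/
theorem division_invariant {L : Type*} [CompleteLinearOrder L]
    {A B : Type*} (D₁ : A × B → L) (D₂ : B → L) (D₃ : A → L)
    (h₁ : {p : A × B | ⊥ < D₁ p}.Finite) (h₂ : {b : B | ⊥ < D₂ b}.Finite)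
    (f : L → L) (hf : ∀ a b : L, f a ≤ f b ↔ a ≤ b) (hf1 : f ⊤ = ⊤) :
    ∀ a : A,
      f (sInf (insert (D₃ a)
          (Set.range fun b : B => godelImp (D₂ b) (D₁ (a, b))))) =
        sInf (insert (f (D₃ a))
          (Set.range fun b : B => godelImp (f (D₂ b)) (f (D₁ (a, b))))) := by
  intro a
  have hcomm : ∀ x y : L, godelImp (f x) (f y) = f (godelImp x y) := by
    intro x y
    unfold godelImp
    by_cases h : x ≤ y
    · rw [if_pos ((hf x y).mpr h), if_pos h, hf1]
    · rw [if_neg (fun h' => h ((hf x y).mp h')), if_neg h]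
  set S : Set L := insert (D₃ a)
      (Set.range fun b : B => godelImp (D₂ b) (D₁ (a, b))) with hS
  have himg : insert (f (D₃ a))
      (Set.range fun b : B => godelImp (f (D₂ b)) (f (D₁ (a, b)))) = f '' S := by
    rw [hS, Set.image_insert_eq]
    congr 1
    rw [← Set.range_comp]
    exact congrArg Set.range (funext fun b => hcomm (D₂ b) (D₁ (a, b)))
  have hfin : S.Finite := by
    have hsub : S ⊆ insert (D₃ a) (insert ⊤
        ((fun b => godelImp (D₂ b) (D₁ (a, b))) '' {b : B | ⊥ < D₂ b})) := by
      intro y hy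
      rcases Set.mem_insert_iff.mp hy with rfl | ⟨b, rfl⟩
      · exact Set.mem_insert _ _
      · by_cases hb : ⊥ < D₂ b
        · exact Set.mem_insert_of_mem _ (Set.mem_insert_of_mem _ ⟨b, hb, rfl⟩)
        · have hbot : D₂ b = ⊥ := le_antisymm (not_lt.mp hb) bot_le
          have h3 : godelImp (D₂ b) (D₁ (a, b)) = ⊤ := by simp [godelImp, hbot]
          show godelImp (D₂ b) (D₁ (a, b)) ∈ _
          rw [h3]
          exact Set.mem_insert_of_mem _ (Set.mem_insert _ _)
    exact Set.Finite.subset (((h₂.image _).insert ⊤).insert (D₃ a)) hsub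
  have hne : S.Nonempty := ⟨D₃ a, Set.mem_insert _ _⟩
  have hmem : sInf S ∈ S := hne.csInf_mem hfin
  rw [himg]
  refine (IsLeast.csInf_eq ⟨Set.mem_image_of_mem f hmem, ?_⟩).symm
  rintro y ⟨x, hx, rfl⟩
  exact (hf _ _).mpr (sInf_le hx)
end
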